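/- arXiv:2110.08773 — 6 statements merged into one kernel-verified Lean document; each statement's English description precedes it below -/
import Mathlib

section
/- Let A : X → Y be a bounded linear operator between Hilbert spaces with X finite-dimensional and A injective. If f lies in the range of A, then the Tikhonov regularized solutions φ_α = (αI + A*A)⁻¹ A* f converge to A†f = (A*A)⁻¹A*f as α → 0⁺. -/
open ContinuousLinearMap Filter

theorem tikhonov_convergence_to_pseudoinverse
    {X Y : Type*} [NormedAddCommGroup X] [InnerProductSpace ℂ X] [FiniteDimensional ℂ X]
    [NormedAddCommGroup Y] [InnerProductSpace ℂ Y] [CompleteSpace Y]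
    (A : X →L[ℂ] Y) (hA : Function.Injective A)
    (f : Y) (hf : f ∈ Set.range A)
    (φ : ℝ → X)
    (hφ : ∀ α : ℝ, 0 < α →
      (α : ℂ) • φ α + ContinuousLinearMap.adjoint A (A (φ α)) = ContinuousLinearMap.adjoint A f)
    (g : X)
    (hg : ContinuousLinearMap.adjoint A (A g) = ContinuousLinearMap.adjoint A f) :
    Tendsto φ (nhdsWithin 0 (Set.Ioi 0)) (nhds g) := by
  classical
  set T : X →L[ℂ] X := (ContinuousLinearMap.adjoint A).comp A with hT
  have hTapp : ∀ x, T x = ContinuousLinearMap.adjoint A (A x) := fun x => rfl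
  have hTinj : Function.Injective T := by
    intro x y hxy
    have h0 : T (x - y) = 0 := by rw [map_sub, hxy, sub_self]
    have hAx : A (x - y) = 0 := by
      have hin : (inner ℂ (A (x - y)) (A (x - y)) : ℂ) = 0 := by
        have h1 := ContinuousLinearMap.adjoint_inner_left A (x - y) (A (x - y))
        have hTz : ContinuousLinearMap.adjoint A (A (x - y)) = 0 := by
          rw [← hTapp, h0]
        rw [← h1, hTz, inner_zero_left]
      exact inner_self_eq_zero.mp hin
    have hx : x - y = 0 := hA (by simpa using hAx)
    exact sub_eq_zero.mp hx
  have hTsurj : Function.Surjective (T : X →ₗ[ℂ] X) :=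
    (LinearMap.injective_iff_surjective).mp hTinj
  let eL : X ≃ₗ[ℂ] X := LinearEquiv.ofBijective (T : X →ₗ[ℂ] X) ⟨hTinj, hTsurj⟩
  let e : X ≃L[ℂ] X := eL.toContinuousLinearEquiv
  set C : ℝ := ‖(e.symm : X →L[ℂ] X)‖ with hC
  have hCnn : 0 ≤ C := norm_nonneg _
  have heT : ∀ x, e x = T x := fun x => rfl
  -- key identity
  have key : ∀ α : ℝ, 0 < α → φ α - g = e.symm (-(α:ℂ) • φ α) := by
    intro α hα
    have h1 : T (φ α - g) = -(α : ℂ) • φ α := by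
      have h2 := hφ α hα
      rw [map_sub, hTapp, hTapp, hg, ← h2]
      module
    have h3 : e (φ α - g) = -(α:ℂ) • φ α := by rw [heT, h1]
    calc φ α - g = e.symm (e (φ α - g)) := (e.symm_apply_apply _).symm
      _ = e.symm (-(α:ℂ) • φ α) := by rw [h3]
  -- norm bound
  have bound : ∀ α : ℝ, 0 < α → ‖φ α - g‖ ≤ C * (α * (‖φ α - g‖ + ‖g‖)) := by
    intro α hα
    calc ‖φ α - g‖ = ‖(e.symm : X →L[ℂ] X) (-(α:ℂ) • φ α)‖ := by rw [key α hα]; rfl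
      _ ≤ C * ‖-(α:ℂ) • φ α‖ := (e.symm : X →L[ℂ] X).le_opNorm _
      _ = C * (α * ‖φ α‖) := by
          rw [norm_smul, norm_neg, Complex.norm_real, Real.norm_eq_abs, abs_of_pos hα]
      _ ≤ C * (α * (‖φ α - g‖ + ‖g‖)) := by
          have : ‖φ α‖ ≤ ‖φ α - g‖ + ‖g‖ := by
            have := norm_add_le (φ α - g) g
            simpa using this
          gcongr
  -- for small α, ‖φ α - g‖ ≤ 2*C*‖g‖*α
  set δ : ℝ := 1 / (2 * (C + 1)) with hδ
  have hδpos : 0 < δ := by positivity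
  have small : ∀ α : ℝ, 0 < α → α < δ → ‖φ α - g‖ ≤ 2 * C * ‖g‖ * α := by
    intro α hα hαδ
    have hb := bound α hα
    have hCα : C * α ≤ 1 / 2 := by
      have h1 : α * (2 * (C + 1)) < 1 := by
        rw [hδ] at hαδ
        calc α * (2 * (C + 1)) < δ * (2 * (C + 1)) := by
              apply mul_lt_mul_of_pos_right hαδ; positivity
          _ = 1 := by
              rw [hδ]; field_simp
      nlinarith [hCnn, hα.le]
    nlinarith [norm_nonneg (φ α - g), norm_nonneg g, hα.le, hCnn]
  -- conclude via squeeze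
  rw [tendsto_iff_norm_sub_tendsto_zero]
  have hlin : Tendsto (fun α : ℝ => 2 * C * ‖g‖ * α) (nhdsWithin 0 (Set.Ioi 0)) (nhds 0) := by
    have h0 : 2 * C * ‖g‖ * (0:ℝ) = 0 := by ring
    have h1 : Tendsto (fun α : ℝ => 2 * C * ‖g‖ * α) (nhds (0:ℝ)) (nhds (2 * C * ‖g‖ * 0)) :=
      tendsto_id.const_mul _
    rw [h0] at h1
    exact h1.mono_left nhdsWithin_le_nhds
  apply squeeze_zero'
  · exact Filter.Eventually.of_forall (fun α => norm_nonneg _)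
  · have h1 : ∀ᶠ α in nhdsWithin (0:ℝ) (Set.Ioi 0), α ∈ Set.Ioo 0 δ :=
      Ioo_mem_nhdsGT_of_mem ⟨le_refl _, hδpos⟩
    filter_upwards [h1] with α hα
    exact small α hα.1 hα.2
  · exact hlin
end

section
/- Let A : X → Y be an injective bounded linear operator between Hilbert spaces and let f = Aφ* for some φ* ∈ X. Then the Tikhonov solutions φ_α = (αI + A*A)⁻¹A*f converge in norm to φ* as α → 0⁺. -/
open ContinuousLinearMap Filter

lemma tikhonov_aux_neg_re_inner_le {E : Type*} [NormedAddCommGroup E]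
    [InnerProductSpace ℂ E] (x y : E) : -((inner ℂ x y : ℂ)).re ≤ ‖x‖ * ‖y‖ := by
  have h2 : |((inner ℂ x y : ℂ)).re| ≤ ‖(inner ℂ x y : ℂ)‖ := Complex.abs_re_le_norm _
  have h3 : ‖(inner ℂ x y : ℂ)‖ ≤ ‖x‖ * ‖y‖ := norm_inner_le_norm x y
  have := h2.trans h3
  linarith [abs_le.mp this]

set_option maxHeartbeats 1000000 in
theorem tikhonov_convergence_injective
    {X Y : Type*} [NormedAddCommGroup X] [InnerProductSpace ℂ X] [CompleteSpace X]
    [NormedAddCommGroup Y] [InnerProductSpace ℂ Y] [CompleteSpace Y]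
    (A : X →L[ℂ] Y) (hA : Function.Injective A)
    (φstar : X) (f : Y) (hf : f = A φstar)
    (φ : ℝ → X)
    (hφ : ∀ α : ℝ, 0 < α →
      (α : ℂ) • φ α + ContinuousLinearMap.adjoint A (A (φ α)) = ContinuousLinearMap.adjoint A f) :
    Tendsto φ (nhdsWithin 0 (Set.Ioi 0)) (nhds φstar) := by
  set B := ContinuousLinearMap.adjoint A with hB
  set e : ℝ → X := fun α => φ α - φstar with he
  -- energy identity
  have key : ∀ α : ℝ, 0 < α →
      α * ‖e α‖ ^ 2 + ‖A (e α)‖ ^ 2 = -(α * ((inner ℂ (e α) φstar : ℂ)).re) := by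
    intro α hα
    have h0 := hφ α hα
    rw [hf] at h0
    have h1 : (α : ℂ) • e α + B (A (e α)) = -((α : ℂ) • φstar) := by
      have : ((α : ℂ) • φ α + B (A (φ α))) - ((α : ℂ) • φstar + B (A φstar))
          = -((α : ℂ) • φstar) := by rw [h0]; abel
      rw [← this]
      simp only [he, smul_sub, map_sub]
      abel
    have h2 : (inner ℂ (e α) ((α : ℂ) • e α + B (A (e α))) : ℂ)
        = inner ℂ (e α) (-((α : ℂ) • φstar)) := by rw [h1]
    rw [inner_add_right, inner_smul_right, hB, ContinuousLinearMap.adjoint_inner_right,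
      inner_neg_right, inner_smul_right, inner_self_eq_norm_sq_to_K,
      inner_self_eq_norm_sq_to_K] at h2
    have := congrArg Complex.re h2
    simpa [← Complex.ofReal_pow] using this
  -- uniform bound on the error
  have hbd : ∀ α : ℝ, 0 < α → ‖e α‖ ≤ ‖φstar‖ := by
    intro α hα
    have hk := key α hα
    have h1 := tikhonov_aux_neg_re_inner_le (e α) φstar
    have h3 : α * ‖e α‖ ^ 2 ≤ α * (‖e α‖ * ‖φstar‖) := by
      nlinarith [sq_nonneg ‖A (e α)‖, mul_le_mul_of_nonneg_left h1 hα.le]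
    have h4 : ‖e α‖ ^ 2 ≤ ‖e α‖ * ‖φstar‖ := le_of_mul_le_mul_left h3 hα
    nlinarith [norm_nonneg (e α), norm_nonneg φstar]
  -- bound on ‖A e‖
  have hAe : ∀ α : ℝ, 0 < α → ‖A (e α)‖ ^ 2 ≤ α * ‖φstar‖ ^ 2 := by
    intro α hα
    have hk := key α hα
    have h1 := tikhonov_aux_neg_re_inner_le (e α) φstar
    have hb := hbd α hα
    nlinarith [mul_le_mul_of_nonneg_left h1 hα.le, sq_nonneg (‖e α‖),
      norm_nonneg (e α), norm_nonneg φstar,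
      mul_le_mul_of_nonneg_right hb (norm_nonneg φstar)]
  -- refined bound using any w : Y
  have href : ∀ (w : Y) (α : ℝ), 0 < α →
      ‖e α‖ ^ 2 ≤ ‖w‖ * ‖A (e α)‖ + ‖φstar - B w‖ * ‖e α‖ := by
    intro w α hα
    have hk := key α hα
    have hsplit : (inner ℂ (e α) φstar : ℂ)
        = inner ℂ (A (e α)) w + inner ℂ (e α) (φstar - B w) := by
      rw [inner_sub_right, hB, ContinuousLinearMap.adjoint_inner_right]
      ring
    have h1 := tikhonov_aux_neg_re_inner_le (A (e α)) w
    have h2 := tikhonov_aux_neg_re_inner_le (e α) (φstar - B w)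
    have h3 : -((inner ℂ (e α) φstar : ℂ)).re
        ≤ ‖A (e α)‖ * ‖w‖ + ‖e α‖ * ‖φstar - B w‖ := by
      rw [hsplit, Complex.add_re]; linarith
    have h4 : α * ‖e α‖ ^ 2
        ≤ α * (‖A (e α)‖ * ‖w‖ + ‖e α‖ * ‖φstar - B w‖) := by
      have hm := mul_le_mul_of_nonneg_left h3 hα.le
      nlinarith [sq_nonneg ‖A (e α)‖]
    have h5 := le_of_mul_le_mul_left h4 hα
    linarith
  -- density of the range of B = A†
  have hdense : ∀ ε : ℝ, 0 < ε → ∃ w : Y, ‖φstar - B w‖ < ε := by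
    intro ε hε
    have horth : (LinearMap.range (B : Y →ₗ[ℂ] X))ᗮ = ⊥ := by
      rw [Submodule.eq_bot_iff]
      intro x hx
      have hx' : (inner ℂ (B (A x)) x : ℂ) = 0 :=
        (Submodule.mem_orthogonal _ x).mp hx _ (LinearMap.mem_range.mpr ⟨A x, rfl⟩)
      rw [hB, ContinuousLinearMap.adjoint_inner_left] at hx'
      have h0 : A x = 0 := inner_self_eq_zero.mp hx'
      have h1 : A x = A 0 := by rw [map_zero]; exact h0
      exact hA h1
    have hcl : (LinearMap.range (B : Y →ₗ[ℂ] X)).topologicalClosure = ⊤ := by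
      rw [← Submodule.orthogonal_orthogonal_eq_closure, horth,
        Submodule.bot_orthogonal_eq_top]
    have hmem : φstar ∈ closure ((LinearMap.range (B : Y →ₗ[ℂ] X) : Submodule ℂ X) : Set X) := by
      have : φstar ∈ (LinearMap.range (B : Y →ₗ[ℂ] X)).topologicalClosure := by
        rw [hcl]; trivial
      exact this
    rw [Metric.mem_closure_iff] at hmem
    obtain ⟨y, hy, hdy⟩ := hmem ε hε
    obtain ⟨w, rfl⟩ := LinearMap.mem_range.mp hy
    exact ⟨w, by rwa [← dist_eq_norm]⟩
  -- conclusion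
  rw [Metric.tendsto_nhdsWithin_nhds]
  intro ε hε
  set M := ‖φstar‖ with hM
  obtain ⟨w, hw⟩ := hdense (ε ^ 2 / (2 * (M + 1))) (by positivity)
  refine ⟨(ε ^ 2 / (2 * (‖w‖ * M + 1))) ^ 2, by positivity, fun α hα hdist => ?_⟩
  have hα' : 0 < α := hα
  have hαδ : α < (ε ^ 2 / (2 * (‖w‖ * M + 1))) ^ 2 := by
    rw [Real.dist_eq] at hdist
    have := abs_lt.mp hdist
    linarith [this.2]
  have hsqrt : Real.sqrt α < ε ^ 2 / (2 * (‖w‖ * M + 1)) := by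
    have h := Real.sqrt_lt_sqrt hα'.le hαδ
    rwa [Real.sqrt_sq (by positivity)] at h
  have hAe' : ‖A (e α)‖ ≤ Real.sqrt α * M := by
    have h2 : ‖A (e α)‖ ^ 2 ≤ (Real.sqrt α * M) ^ 2 := by
      rw [mul_pow, Real.sq_sqrt hα'.le]; exact hAe α hα'
    have h3 := Real.sqrt_le_sqrt h2
    rwa [Real.sqrt_sq (norm_nonneg _), Real.sqrt_sq (by positivity)] at h3
  have hb := hbd α hα'
  have h5 := href w α hα'
  have step1 : ‖w‖ * ‖A (e α)‖ ≤ ‖w‖ * (Real.sqrt α * M) :=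
    mul_le_mul_of_nonneg_left hAe' (norm_nonneg w)
  have step2 : ‖w‖ * (Real.sqrt α * M) < ε ^ 2 / 2 := by
    have hnn : (0 : ℝ) ≤ ‖w‖ * M := by positivity
    have e1 : ‖w‖ * (Real.sqrt α * M) = (‖w‖ * M) * Real.sqrt α := by ring
    have e2 : (‖w‖ * M) * Real.sqrt α ≤ (‖w‖ * M) * (ε ^ 2 / (2 * (‖w‖ * M + 1))) :=
      mul_le_mul_of_nonneg_left hsqrt.le hnn
    have e3 : (‖w‖ * M) * (ε ^ 2 / (2 * (‖w‖ * M + 1)))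
        < (‖w‖ * M + 1) * (ε ^ 2 / (2 * (‖w‖ * M + 1))) :=
      mul_lt_mul_of_pos_right (by linarith) (by positivity)
    have e4 : (‖w‖ * M + 1) * (ε ^ 2 / (2 * (‖w‖ * M + 1))) = ε ^ 2 / 2 := by
      field_simp
    linarith
  have step3 : ‖φstar - B w‖ * ‖e α‖ ≤ ‖φstar - B w‖ * M :=
    mul_le_mul_of_nonneg_left hb (norm_nonneg _)
  have step4 : ‖φstar - B w‖ * M < ε ^ 2 / 2 := by
    have e2 : ‖φstar - B w‖ * M ≤ ‖φstar - B w‖ * (M + 1) :=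
      mul_le_mul_of_nonneg_left (by linarith) (norm_nonneg _)
    have e3 : ‖φstar - B w‖ * (M + 1) < (ε ^ 2 / (2 * (M + 1))) * (M + 1) :=
      mul_lt_mul_of_pos_right hw (by positivity)
    have e4 : (ε ^ 2 / (2 * (M + 1))) * (M + 1) = ε ^ 2 / 2 := by
      rw [div_mul_eq_mul_div, mul_div_mul_right _ _ (ne_of_gt (by rw [hM]; positivity))]
    linarith
  have hsq : ‖e α‖ ^ 2 < ε ^ 2 := by linarith
  rw [dist_eq_norm]
  have : ‖φ α - φstar‖ = ‖e α‖ := rfl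
  rw [this]
  nlinarith [norm_nonneg (e α), hε]
end

section
/- Let A : X → Y be an injective compact linear operator between Hilbert spaces and f ∈ Y. If f ∈ Range(A), then the family of Tikhonov solutions φ_α = (αI + A*A)⁻¹A*f is uniformly bounded in norm for α > 0; if f ∉ closure-free range (f ∉ Range(A)) then ‖φ_α‖ → ∞ as α → 0⁺. -/
open ContinuousLinearMap Filter Topology

local notation "⟪" x ", " y "⟫" => @inner ℂ _ _ x y

private lemma tik_cross {X Y : Type*} [NormedAddCommGroup X] [InnerProductSpace ℂ X]
    [CompleteSpace X] [NormedAddCommGroup Y] [InnerProductSpace ℂ Y] [CompleteSpace Y]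
    (A : X →L[ℂ] Y) (f : Y) (u z : X) (α : ℝ)
    (h : (α : ℂ) • u + ContinuousLinearMap.adjoint A (A u) = ContinuousLinearMap.adjoint A f) :
    RCLike.re ⟪A u - f, A (z - u)⟫ + α * RCLike.re ⟪u, z - u⟫ = 0 := by
  have hzero : (α : ℂ) • u + adjoint A (A u - f) = 0 := by
    rw [map_sub, ← h]; abel
  have h2 : ⟪(α : ℂ) • u + adjoint A (A u - f), z - u⟫ = 0 := by
    rw [hzero, inner_zero_left]
  rw [inner_add_left, inner_smul_left, ContinuousLinearMap.adjoint_inner_left] at h2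
  have h3 := congrArg Complex.re h2
  simp only [Complex.add_re, Complex.conj_ofReal, Complex.re_ofReal_mul, Complex.zero_re] at h3
  have h5 : RCLike.re (⟪A u - f, A (z - u)⟫) = (⟪A u - f, A (z - u)⟫ : ℂ).re := rfl
  have h4 : RCLike.re (⟪u, z - u⟫) = (⟪u, z - u⟫ : ℂ).re := rfl
  rw [h5, h4]; linarith

/-- the Tikhonov solution minimizes the Tikhonov functional -/
private lemma tik_min {X Y : Type*} [NormedAddCommGroup X] [InnerProductSpace ℂ X]
    [CompleteSpace X] [NormedAddCommGroup Y] [InnerProductSpace ℂ Y] [CompleteSpace Y]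
    (A : X →L[ℂ] Y) (f : Y) (u z : X) (α : ℝ) (hα : 0 ≤ α)
    (h : (α : ℂ) • u + ContinuousLinearMap.adjoint A (A u) = ContinuousLinearMap.adjoint A f) :
    ‖A u - f‖ ^ 2 + α * ‖u‖ ^ 2 ≤ ‖A z - f‖ ^ 2 + α * ‖z‖ ^ 2 := by
  have hc := tik_cross A f u z α h
  have e1 : A z - f = (A u - f) + A (z - u) := by
    rw [map_sub]; abel
  have e2 : z = u + (z - u) := by abel
  have n1 : ‖A z - f‖ ^ 2
      = ‖A u - f‖ ^ 2 + 2 * RCLike.re ⟪A u - f, A (z - u)⟫ + ‖A (z - u)‖ ^ 2 := by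
    rw [e1, @norm_add_sq ℂ]
  have n2 : ‖z‖ ^ 2 = ‖u‖ ^ 2 + 2 * RCLike.re ⟪u, z - u⟫ + ‖z - u‖ ^ 2 := by
    conv_lhs => rw [e2]
    rw [@norm_add_sq ℂ]
  nlinarith [sq_nonneg ‖A (z - u)‖, mul_nonneg hα (sq_nonneg ‖z - u‖)]

theorem tikhonov_boundedness_and_blowup
    {X Y : Type*} [NormedAddCommGroup X] [InnerProductSpace ℂ X] [CompleteSpace X]
    [NormedAddCommGroup Y] [InnerProductSpace ℂ Y] [CompleteSpace Y]
    (A : X →L[ℂ] Y) (hcompact : IsCompactOperator A) (hA : Function.Injective A)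
    (f : Y) (φ : ℝ → X)
    (hφ : ∀ α : ℝ, 0 < α →
      (α : ℂ) • φ α + ContinuousLinearMap.adjoint A (A (φ α)) = ContinuousLinearMap.adjoint A f) :
    (f ∈ Set.range A → ∃ C : ℝ, ∀ α : ℝ, 0 < α → ‖φ α‖ ≤ C) ∧
    ((f ∈ closure (Set.range A) ∧ f ∉ Set.range A) →
      Tendsto (fun α => ‖φ α‖) (nhdsWithin 0 (Set.Ioi 0)) atTop) := by
  -- monotonicity of the squared norms
  have monosq : ∀ α β : ℝ, 0 < α → α ≤ β → ‖φ β‖ ^ 2 ≤ ‖φ α‖ ^ 2 := by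
    intro α β hα hαβ
    have hβ : 0 < β := lt_of_lt_of_le hα hαβ
    have h1 := tik_min A f (φ α) (φ β) α hα.le (hφ α hα)
    have h2 := tik_min A f (φ β) (φ α) β hβ.le (hφ β hβ)
    rcases eq_or_lt_of_le hαβ with h | h
    · subst h; exact le_rfl
    · by_contra h'
      push_neg at h'
      nlinarith
  have mono : ∀ α β : ℝ, 0 < α → α ≤ β → ‖φ β‖ ≤ ‖φ α‖ := by
    intro α β hα hαβ
    have := Real.sqrt_le_sqrt (monosq α β hα hαβ)
    rwa [Real.sqrt_sq (norm_nonneg _), Real.sqrt_sq (norm_nonneg _)] at this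
  -- the key Cauchy-type estimate
  have hdiff : ∀ α β : ℝ, 0 < α → α ≤ β → ‖φ α - φ β‖ ^ 2 ≤ ‖φ α‖ ^ 2 - ‖φ β‖ ^ 2 := by
    intro α β hα hαβ
    have hβ : 0 < β := lt_of_lt_of_le hα hαβ
    set u := φ α with hu
    set v := φ β with hv
    have key : (α : ℂ) • u + adjoint A (A u) = (β : ℂ) • v + adjoint A (A v) :=
      (hφ α hα).trans (hφ β hβ).symm
    have hTe : adjoint A (A (u - v)) = (β : ℂ) • v - (α : ℂ) • u := by
      rw [map_sub, map_sub, sub_eq_sub_iff_add_eq_add, add_comm]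
      rw [key]
    have hpos : (0:ℝ) ≤ RCLike.re ⟪(β : ℂ) • v - (α : ℂ) • u, u - v⟫ := by
      rw [← hTe, ContinuousLinearMap.adjoint_inner_left, @inner_self_eq_norm_sq ℂ]
      positivity
    have hexp : RCLike.re ⟪(β : ℂ) • v - (α : ℂ) • u, u - v⟫
        = β * (RCLike.re ⟪u, v⟫ - ‖v‖ ^ 2) - α * (‖u‖ ^ 2 - RCLike.re ⟪u, v⟫) := by
      rw [inner_sub_left, inner_smul_left, inner_smul_left, inner_sub_right, inner_sub_right]
      have hvu : RCLike.re (⟪v, u⟫ : ℂ) = RCLike.re (⟪u, v⟫ : ℂ) := inner_re_symm v u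
      have h1 : RCLike.re (⟪u, u⟫ : ℂ) = ‖u‖^2 := @inner_self_eq_norm_sq ℂ _ _ _ _ u
      have h2 : RCLike.re (⟪v, v⟫ : ℂ) = ‖v‖^2 := @inner_self_eq_norm_sq ℂ _ _ _ _ v
      simp only [Complex.conj_ofReal, map_sub, RCLike.re_to_complex, Complex.sub_re,
        Complex.re_ofReal_mul]
      simp only [RCLike.re_to_complex] at hvu h1 h2
      rw [hvu, h1, h2]
    have hle : ‖v‖ ^ 2 ≤ ‖u‖ ^ 2 := monosq α β hα hαβ
    have hs : ‖v‖ ^ 2 ≤ RCLike.re ⟪u, v⟫ := by nlinarith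
    have hns : ‖u - v‖ ^ 2 = ‖u‖ ^ 2 - 2 * RCLike.re ⟪u, v⟫ + ‖v‖ ^ 2 := @norm_sub_sq ℂ _ _ _ _ u v
    nlinarith
  constructor
  · -- boundedness when f ∈ range A
    rintro ⟨x₀, rfl⟩
    refine ⟨‖x₀‖, fun α hα => ?_⟩
    have hc := tik_cross A (A x₀) (φ α) x₀ α (hφ α hα)
    set u := φ α with hu
    have e1 : RCLike.re ⟪A u - A x₀, A (x₀ - u)⟫ = -‖A (x₀ - u)‖ ^ 2 := by
      have h : A u - A x₀ = -(A (x₀ - u)) := by rw [map_sub]; abel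
      rw [h, inner_neg_left, map_neg, @inner_self_eq_norm_sq ℂ]
    have e2 : RCLike.re ⟪u, x₀ - u⟫ = RCLike.re ⟪u, x₀⟫ - ‖u‖ ^ 2 := by
      rw [inner_sub_right, map_sub, @inner_self_eq_norm_sq ℂ]
    rw [e1, e2] at hc
    have hsq : ‖u‖ ^ 2 ≤ RCLike.re ⟪u, x₀⟫ := by nlinarith [sq_nonneg ‖A (x₀ - u)‖]
    have hcs : RCLike.re ⟪u, x₀⟫ ≤ ‖u‖ * ‖x₀‖ := re_inner_le_norm u x₀
    rcases eq_or_lt_of_le (norm_nonneg u) with h0 | h0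
    · rw [← h0]; exact norm_nonneg _
    · have : ‖u‖ * ‖u‖ ≤ ‖u‖ * ‖x₀‖ := by nlinarith
      exact le_of_mul_le_mul_left this h0
  · -- blow-up when f ∈ closure (range A) \ range A
    rintro ⟨hcl, hnr⟩
    by_contra hnot
    rw [tendsto_atTop] at hnot
    push_neg at hnot
    obtain ⟨b, hb⟩ := hnot
    simp only [← not_le] at hb
    have hbdd : ∀ α : ℝ, 0 < α → ‖φ α‖ < b := by
      intro α hα
      have hmem : Set.Ioo (0:ℝ) α ∈ nhdsWithin 0 (Set.Ioi 0) :=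
        Ioo_mem_nhdsGT_of_mem ⟨le_refl 0, hα⟩
      obtain ⟨α', hα'1, hα'2⟩ := (hb.and_eventually (eventually_of_mem hmem (fun x hx => hx))).exists
      push_neg at hα'1
      exact lt_of_le_of_lt (mono α' α hα'2.1 hα'2.2.le) hα'1
    -- the sequence
    set s : ℕ → X := fun n => φ (1 / (n + 1)) with hs
    have hposn : ∀ n : ℕ, (0:ℝ) < 1 / (n + 1) := fun n => by positivity
    have hmonon : Monotone (fun n => ‖s n‖ ^ 2) := by
      intro n m hnm
      exact monosq (1 / (m + 1)) (1 / (n + 1)) (hposn m)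
        (by apply one_div_le_one_div_of_le (by positivity); push_cast; have := (Nat.cast_le (α := ℝ)).2 hnm; linarith)
    have hbddabove : BddAbove (Set.range (fun n => ‖s n‖ ^ 2)) := by
      refine ⟨b ^ 2, ?_⟩
      rintro _ ⟨n, rfl⟩
      have h := hbdd (1 / (n + 1)) (hposn n)
      have h' : ‖s n‖ < b := h
      show ‖s n‖ ^ 2 ≤ b ^ 2
      nlinarith [norm_nonneg (s n)]
    have hconv : Tendsto (fun n => ‖s n‖ ^ 2) atTop (𝓝 (⨆ n, ‖s n‖ ^ 2)) :=
      tendsto_atTop_ciSup hmonon hbddabove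
    set L := ⨆ n, ‖s n‖ ^ 2 with hL
    have hleL : ∀ n, ‖s n‖ ^ 2 ≤ L := fun n => le_ciSup hbddabove n
    -- Cauchy
    have hcs : CauchySeq s := by
      rw [Metric.cauchySeq_iff']
      intro ε hε
      have : ∀ᶠ n in atTop, L - ε ^ 2 < ‖s n‖ ^ 2 :=
        hconv.eventually (eventually_gt_nhds (by nlinarith))
      obtain ⟨N, hN⟩ := this.exists_forall_of_atTop
      refine ⟨N, fun n hn => ?_⟩
      have h1 : 1 / ((n : ℝ) + 1) ≤ 1 / ((N : ℝ) + 1) :=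
        one_div_le_one_div_of_le (by positivity) (by push_cast; have := (Nat.cast_le (α := ℝ)).2 hn; linarith)
      have h2 := hdiff (1 / (n + 1)) (1 / (N + 1)) (hposn n) h1
      have h3 : ‖s n - s N‖ ^ 2 ≤ ‖s n‖ ^ 2 - ‖s N‖ ^ 2 := h2
      have h4 : ‖s n - s N‖ ^ 2 < ε ^ 2 := by
        have := hN N (le_refl N)
        have := hleL n
        linarith
      rw [dist_eq_norm]
      exact lt_of_pow_lt_pow_left₀ 2 hε.le h4
    obtain ⟨x, hx⟩ := cauchySeq_tendsto_of_complete hcs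
    have hAx : Tendsto (fun n => A (s n)) atTop (𝓝 (A x)) := (A.continuous.tendsto x).comp hx
    have hAf : Tendsto (fun n => A (s n)) atTop (𝓝 f) := by
      rw [Metric.tendsto_atTop]
      intro ε hε
      obtain ⟨y, ⟨z, rfl⟩, hyz⟩ := Metric.mem_closure_iff.mp hcl (ε / 2) (by linarith)
      have hzf : ‖A z - f‖ < ε / 2 := by rwa [← dist_eq_norm, dist_comm]
      have htend : Tendsto (fun n : ℕ => 1 / ((n : ℝ) + 1) * ‖z‖ ^ 2) atTop (𝓝 0) := by
        have := tendsto_one_div_add_atTop_nhds_zero_nat (𝕜 := ℝ)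
        simpa using this.mul_const (‖z‖ ^ 2)
      have : ∀ᶠ n : ℕ in atTop, 1 / ((n : ℝ) + 1) * ‖z‖ ^ 2 < ε ^ 2 / 2 := by
        have := htend.eventually (eventually_lt_nhds (show (0:ℝ) < ε ^ 2 / 2 by positivity))
        simpa using this
      obtain ⟨N, hN⟩ := this.exists_forall_of_atTop
      refine ⟨N, fun n hn => ?_⟩
      have hm := tik_min A f (s n) z (1 / (n + 1)) (hposn n).le (hφ _ (hposn n))
      have hzn : ‖A (s n) - f‖ ^ 2 < ε ^ 2 := by
        have h1 := hN n hn
        have h2 : (0:ℝ) ≤ 1 / ((n:ℝ) + 1) * ‖s n‖ ^ 2 :=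
          mul_nonneg (hposn n).le (sq_nonneg _)
        nlinarith [norm_nonneg (A z - f), hzf]
      rw [dist_eq_norm]
      exact lt_of_pow_lt_pow_left₀ 2 hε.le hzn
    exact hnr ⟨x, (tendsto_nhds_unique hAf hAx).symm⟩
end

section
/- Kalman filter equals Full data Tikhonov: Let f₁,…,f_N ∈ Y, linear operators A₁,…,A_N : X → Y, initial guess φ₀ ∈ X, α > 0, B₀ := α⁻¹I, and R : Y → Y positive definite self-adjoint. Define recursively K_n := B_{n−1} A_nᴴ (R + A_n B_{n−1} A_nᴴ)⁻¹, φ_n := φ_{n−1} + K_n(f_n − A_n φ_{n−1}), B_n := (I − K_n A_n) B_{n−1}. Then φ_N equals the minimizer of J(φ) = α‖φ − φ₀‖² + Σ_{n=1}^N ⟨f_n − A_n φ, R⁻¹(f_n − A_n φ)⟩ over X, i.e. φ_N = φ₀ + (αI + ΣA_nᴴR⁻¹A_n)⁻¹ Σ A_nᴴ R⁻¹ (f_n − A_n φ₀). -/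
set_option maxHeartbeats 1000000

open Matrix ComplexOrder Finset

private lemma smul_one_posDef {m : ℕ} {α : ℝ} (hα : 0 < α) :
    ((α : ℂ) • (1 : Matrix (Fin m) (Fin m) ℂ)).PosDef := by
  constructor
  · show ((α : ℂ) • (1 : Matrix (Fin m) (Fin m) ℂ))ᴴ = _
    simp [Complex.conj_ofReal]
  · intro x hx
    have hαC : (0 : ℂ) < (α : ℂ) := by
      rw [Complex.zero_lt_real]; exact hα
    exact ((Matrix.PosDef.one (R := ℂ) (n := Fin m)).smul hαC).2 hx

theorem kalman_filter_eq_full_data_tikhonov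
    {m l N : ℕ}
    (α : ℝ) (hα : 0 < α)
    (R : Matrix (Fin l) (Fin l) ℂ) (hR : R.PosDef)
    (A : ℕ → Matrix (Fin l) (Fin m) ℂ)
    (f : ℕ → (Fin l → ℂ))
    (φ₀ : Fin m → ℂ)
    (B : ℕ → Matrix (Fin m) (Fin m) ℂ)
    (φ : ℕ → (Fin m → ℂ))
    (K : ℕ → Matrix (Fin m) (Fin l) ℂ)
    (hB0 : B 0 = (α : ℂ)⁻¹ • (1 : Matrix (Fin m) (Fin m) ℂ))
    (hφ0 : φ 0 = φ₀)
    (hK : ∀ n, K n = B n * (A n)ᴴ * (R + A n * B n * (A n)ᴴ)⁻¹)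
    (hφ : ∀ n, φ (n + 1) = φ n + K n *ᵥ (f n - A n *ᵥ φ n))
    (hBrec : ∀ n, B (n + 1) = (1 - K n * A n) * B n) :
    φ N = φ₀ + ((α : ℂ) • (1 : Matrix (Fin m) (Fin m) ℂ)
          + ∑ n ∈ range N, (A n)ᴴ * R⁻¹ * A n)⁻¹
        *ᵥ (∑ n ∈ range N, (A n)ᴴ *ᵥ (R⁻¹ *ᵥ (f n - A n *ᵥ φ₀))) := by
  set M : ℕ → Matrix (Fin m) (Fin m) ℂ :=
    fun n => (α : ℂ) • (1 : Matrix (Fin m) (Fin m) ℂ)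
      + ∑ k ∈ range n, (A k)ᴴ * R⁻¹ * A k with hM
  set S : ℕ → (Fin m → ℂ) :=
    fun n => ∑ k ∈ range n, (A k)ᴴ *ᵥ (R⁻¹ *ᵥ (f k - A k *ᵥ φ₀)) with hS
  have hRinv : (R⁻¹).PosDef := hR.inv
  have hRdet : IsUnit R.det := hR.det_pos.ne'.isUnit
  have hMpd : ∀ n, (M n).PosDef := by
    intro n
    apply (smul_one_posDef hα).add_posSemidef
    apply Finset.sum_induction _ (fun X => Matrix.PosSemidef X)
      (fun a b ha hb => ha.add hb) Matrix.PosSemidef.zero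
    intro k _
    exact hRinv.posSemidef.conjTranspose_mul_mul_same (A k)
  have main : ∀ n, B n = (M n)⁻¹ ∧ φ n = φ₀ + B n *ᵥ S n := by
    intro n
    induction n with
    | zero =>
      constructor
      · rw [hB0]
        symm
        apply Matrix.inv_eq_right_inv
        show ((α : ℂ) • 1 + ∑ k ∈ range 0, (A k)ᴴ * R⁻¹ * A k)
            * ((α : ℂ)⁻¹ • 1) = 1
        rw [Finset.range_zero, Finset.sum_empty, add_zero, smul_mul_smul_comm,
          mul_inv_cancel₀ (Complex.ofReal_ne_zero.mpr hα.ne'), one_mul, one_smul]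
      · simp [hφ0, hS]
    | succ n ih =>
      obtain ⟨hBn, hφn⟩ := ih
      have hMdet : IsUnit (M n).det := (hMpd n).det_pos.ne'.isUnit
      have hMBn : M n * B n = 1 := by
        rw [hBn]; exact Matrix.mul_nonsing_inv _ hMdet
      have hGpd : (R + A n * B n * (A n)ᴴ).PosDef := by
        rw [hBn]
        exact hR.add_posSemidef ((hMpd n).inv.posSemidef.mul_mul_conjTranspose_same (A n))
      have hGdet : IsUnit (R + A n * B n * (A n)ᴴ).det := hGpd.det_pos.ne'.isUnit
      have hMn1 : M (n + 1) = M n + (A n)ᴴ * R⁻¹ * A n := by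
        simp [hM, Finset.sum_range_succ, add_assoc]
      -- key identity: M (n+1) * K n = (A n)ᴴ * R⁻¹
      have E : M (n + 1) * (B n * (A n)ᴴ)
          = (A n)ᴴ * R⁻¹ * (R + A n * B n * (A n)ᴴ) := by
        rw [hMn1, Matrix.add_mul, ← Matrix.mul_assoc (M n), hMBn, Matrix.one_mul,
          Matrix.mul_add, Matrix.nonsing_inv_mul_cancel_right _ _ hRdet]
        congr 1
        simp only [Matrix.mul_assoc]
      have key : M (n + 1) * K n = (A n)ᴴ * R⁻¹ := by
        rw [hK n, ← Matrix.mul_assoc, E,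
          Matrix.mul_nonsing_inv_cancel_right _ _ hGdet]
      have hMB : M (n + 1) * B (n + 1) = 1 := by
        rw [hBrec n, Matrix.sub_mul, Matrix.one_mul, Matrix.mul_sub]
        have h2 : M (n + 1) * (K n * A n * B n) = (A n)ᴴ * R⁻¹ * A n * B n := by
          simp only [← Matrix.mul_assoc]
          rw [key]
        rw [h2, hMn1, Matrix.add_mul, hMBn]
        abel
      have hBn1 : B (n + 1) = (M (n + 1))⁻¹ := (Matrix.inv_eq_right_inv hMB).symm
      have hBM : B (n + 1) * M (n + 1) = 1 := by
        rw [hBn1]; exact Matrix.nonsing_inv_mul _ (hMpd (n + 1)).det_pos.ne'.isUnit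
      refine ⟨hBn1, ?_⟩
      have hKeq : K n = B (n + 1) * ((A n)ᴴ * R⁻¹) := by
        calc K n = (B (n + 1) * M (n + 1)) * K n := by rw [hBM, Matrix.one_mul]
          _ = B (n + 1) * (M (n + 1) * K n) := Matrix.mul_assoc _ _ _
          _ = B (n + 1) * ((A n)ᴴ * R⁻¹) := by rw [key]
      have hSsucc : S (n + 1) = S n + (A n)ᴴ *ᵥ (R⁻¹ *ᵥ (f n - A n *ᵥ φ₀)) := by
        simp [hS, Finset.sum_range_succ]
      have hmat : B n - B (n + 1) * ((A n)ᴴ * R⁻¹) * A n * B n = B (n + 1) := by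
        rw [← hKeq, hBrec n, Matrix.sub_mul, Matrix.one_mul]
      have h3 : B n *ᵥ S n
          - (B (n + 1) * ((A n)ᴴ * R⁻¹)) *ᵥ (A n *ᵥ (B n *ᵥ S n)) = B (n + 1) *ᵥ S n := by
        rw [Matrix.mulVec_mulVec, Matrix.mulVec_mulVec, ← Matrix.sub_mulVec, hmat]
      have h4 : (B (n + 1) * ((A n)ᴴ * R⁻¹)) *ᵥ (f n - A n *ᵥ φ₀)
          = B (n + 1) *ᵥ ((A n)ᴴ *ᵥ (R⁻¹ *ᵥ (f n - A n *ᵥ φ₀))) := by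
        simp only [Matrix.mulVec_mulVec, Matrix.mul_assoc]
      have hfA : f n - A n *ᵥ (φ₀ + B n *ᵥ S n)
          = (f n - A n *ᵥ φ₀) - A n *ᵥ (B n *ᵥ S n) := by
        rw [Matrix.mulVec_add]; abel
      rw [hφ n, hφn, hSsucc, hfA, Matrix.mulVec_sub, hKeq, Matrix.mulVec_add]
      calc φ₀ + B n *ᵥ S n + ((B (n + 1) * ((A n)ᴴ * R⁻¹)) *ᵥ (f n - A n *ᵥ φ₀)
            - (B (n + 1) * ((A n)ᴴ * R⁻¹)) *ᵥ (A n *ᵥ (B n *ᵥ S n)))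
          = φ₀ + (B n *ᵥ S n - (B (n + 1) * ((A n)ᴴ * R⁻¹)) *ᵥ (A n *ᵥ (B n *ᵥ S n)))
            + (B (n + 1) * ((A n)ᴴ * R⁻¹)) *ᵥ (f n - A n *ᵥ φ₀) := by abel
        _ = φ₀ + (B (n + 1) *ᵥ S n + B (n + 1) *ᵥ ((A n)ᴴ *ᵥ (R⁻¹ *ᵥ (f n - A n *ᵥ φ₀)))) := by
            rw [h3, h4]; abel
  obtain ⟨hBN, hφN⟩ := main N
  rw [hφN, hBN]
end

section
/- For n measurements, there is a constant c_n ∈ ℝ (independent of φ) such that the cumulative functional J_{Full,n}(φ) = ⟨φ − φ₀, B₀⁻¹(φ − φ₀)⟩ + Σ_{j=1}^n ⟨f_j − A_j φ, R⁻¹(f_j − A_j φ)⟩ satisfies J_{Full,n}(φ) = ⟨φ − φ_n, B_n⁻¹(φ − φ_n)⟩ + c_n for all φ ∈ X, where φ_n and B_n are the Kalman filter iterates. -/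
/-!
With `P = B⁻¹ + Aᴴ R⁻¹ A` the push-through identity `P B Aᴴ = Aᴴ R⁻¹ (R + A B Aᴴ)` gives
`P K = Aᴴ R⁻¹` and `P B' = 1`, so one Kalman step replaces `B⁻¹` by `B'⁻¹ = P`. Completing the
square in `ψ` then absorbs one measurement term:
`‖ψ - φ‖²_{B⁻¹} + ‖f - Aψ‖²_{R⁻¹} = ‖ψ - φ'‖²_{B'⁻¹} + ‖f - Aφ‖²_{S⁻¹}` with `S = R + A B Aᴴ`.
Summing over the steps, `c_n` is the sum of the innovation terms `‖f_j - A_j φ_j‖²_{S_j⁻¹}`,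
which are real because `S_j⁻¹` is positive definite.
-/

open Matrix ComplexOrder Finset

namespace Matrix

variable {n p : Type*} [Fintype n] [DecidableEq n] [Fintype p] [DecidableEq p]

noncomputable def kalmanGain (B : Matrix n n ℂ) (R : Matrix p p ℂ) (A : Matrix p n ℂ) :
    Matrix n p ℂ :=
  B * Aᴴ * (R + A * B * Aᴴ)⁻¹

noncomputable def kalmanCov (B : Matrix n n ℂ) (R : Matrix p p ℂ) (A : Matrix p n ℂ) :
    Matrix n n ℂ :=
  (1 - kalmanGain B R A * A) * B

variable {B : Matrix n n ℂ} {R : Matrix p p ℂ} (A : Matrix p n ℂ)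

omit [DecidableEq n] [DecidableEq p] in
lemma PosDef.add_mul_mul_conjTranspose (hR : R.PosDef) (hB : B.PosDef) :
    (R + A * B * Aᴴ).PosDef :=
  hR.add_posSemidef (hB.posSemidef.mul_mul_conjTranspose_same A)

lemma PosDef.inv_add_conjTranspose_mul_inv_mul (hB : B.PosDef) (hR : R.PosDef) :
    (B⁻¹ + Aᴴ * R⁻¹ * A).PosDef :=
  hB.inv.add_posSemidef (hR.inv.posSemidef.conjTranspose_mul_mul_same A)

lemma inv_add_mul_kalmanGain (hB : B.PosDef) (hR : R.PosDef) :
    (B⁻¹ + Aᴴ * R⁻¹ * A) * kalmanGain B R A = Aᴴ * R⁻¹ := by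
  have hpush : (B⁻¹ + Aᴴ * R⁻¹ * A) * (B * Aᴴ) = Aᴴ * R⁻¹ * (R + A * B * Aᴴ) := by
    rw [Matrix.add_mul, Matrix.mul_add, ← Matrix.mul_assoc,
      nonsing_inv_mul _ ((isUnit_iff_isUnit_det B).mp hB.isUnit), Matrix.one_mul,
      nonsing_inv_mul_cancel_right _ _ ((isUnit_iff_isUnit_det R).mp hR.isUnit)]
    simp only [Matrix.mul_assoc]
  have hS := (isUnit_iff_isUnit_det _).mp (hR.add_mul_mul_conjTranspose A hB).isUnit
  rw [kalmanGain, ← Matrix.mul_assoc, hpush, mul_nonsing_inv_cancel_right _ _ hS]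

lemma inv_add_mul_kalmanCov (hB : B.PosDef) (hR : R.PosDef) :
    (B⁻¹ + Aᴴ * R⁻¹ * A) * kalmanCov B R A = 1 := by
  rw [kalmanCov, Matrix.sub_mul, Matrix.one_mul, Matrix.mul_sub, ← Matrix.mul_assoc,
    ← Matrix.mul_assoc, inv_add_mul_kalmanGain A hB hR, Matrix.add_mul,
    nonsing_inv_mul _ ((isUnit_iff_isUnit_det B).mp hB.isUnit), add_sub_cancel_right]

lemma inv_kalmanCov (hB : B.PosDef) (hR : R.PosDef) :
    (kalmanCov B R A)⁻¹ = B⁻¹ + Aᴴ * R⁻¹ * A :=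
  inv_eq_left_inv (inv_add_mul_kalmanCov A hB hR)

lemma PosDef.kalmanCov (hB : B.PosDef) (hR : R.PosDef) : (kalmanCov B R A).PosDef := by
  rw [← inv_eq_right_inv (inv_add_mul_kalmanCov A hB hR)]
  exact (hB.inv_add_conjTranspose_mul_inv_mul A hR).inv

omit [DecidableEq n] in
lemma conjTranspose_kalmanGain_mul (hB : B.PosDef) (hR : R.PosDef) :
    (kalmanGain B R A)ᴴ * (Aᴴ * R⁻¹) = R⁻¹ - (R + A * B * Aᴴ)⁻¹ := by
  have hS := hR.add_mul_mul_conjTranspose A hB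
  have hK : (kalmanGain B R A)ᴴ = (R + A * B * Aᴴ)⁻¹ * (A * B) := by
    rw [kalmanGain, conjTranspose_mul, conjTranspose_mul, conjTranspose_conjTranspose,
      hS.inv.isHermitian.eq, hB.isHermitian.eq, Matrix.mul_assoc]
  calc (kalmanGain B R A)ᴴ * (Aᴴ * R⁻¹)
      = (R + A * B * Aᴴ)⁻¹ * ((R + A * B * Aᴴ) - R) * R⁻¹ := by
        rw [hK, add_sub_cancel_left]; simp only [Matrix.mul_assoc]
    _ = R⁻¹ - (R + A * B * Aᴴ)⁻¹ := by
        rw [Matrix.mul_sub, Matrix.sub_mul,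
          nonsing_inv_mul _ ((isUnit_iff_isUnit_det _).mp hS.isUnit), Matrix.one_mul,
          mul_nonsing_inv_cancel_right _ _ ((isUnit_iff_isUnit_det R).mp hR.isUnit)]

lemma kalman_quadForm_step (hB : B.PosDef) (hR : R.PosDef) (ψ φ : n → ℂ) (f : p → ℂ) :
    star (ψ - φ) ⬝ᵥ (B⁻¹ *ᵥ (ψ - φ)) + star (f - A *ᵥ ψ) ⬝ᵥ (R⁻¹ *ᵥ (f - A *ᵥ ψ))
      = star (ψ - (φ + kalmanGain B R A *ᵥ (f - A *ᵥ φ))) ⬝ᵥ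
          ((kalmanCov B R A)⁻¹ *ᵥ (ψ - (φ + kalmanGain B R A *ᵥ (f - A *ᵥ φ))))
        + star (f - A *ᵥ φ) ⬝ᵥ ((R + A * B * Aᴴ)⁻¹ *ᵥ (f - A *ᵥ φ)) := by
  have hPK := inv_add_mul_kalmanGain A hB hR
  have hKP : (kalmanGain B R A)ᴴ * (B⁻¹ + Aᴴ * R⁻¹ * A) = R⁻¹ * A := by
    simpa [conjTranspose_mul, (hB.inv_add_conjTranspose_mul_inv_mul A hR).isHermitian.eq,
      hR.inv.isHermitian.eq] using congrArg conjTranspose hPK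
  have hu : ψ - (φ + kalmanGain B R A *ᵥ (f - A *ᵥ φ))
      = (ψ - φ) - kalmanGain B R A *ᵥ (f - A *ᵥ φ) := sub_add_eq_sub_sub ..
  have hg : f - A *ᵥ ψ = (f - A *ᵥ φ) - A *ᵥ (ψ - φ) := by rw [mulVec_sub]; abel
  generalize ψ - φ = u, f - A *ᵥ φ = g at *
  rw [hu, hg, inv_kalmanCov A hB hR]
  simp only [star_sub, mulVec_sub, dotProduct_sub, sub_dotProduct, star_mulVec,
    ← dotProduct_mulVec, mulVec_mulVec, hPK, hKP, conjTranspose_kalmanGain_mul A hB hR]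
  simp only [Matrix.mul_assoc, add_mulVec, sub_mulVec, dotProduct_add, dotProduct_sub]
  ring

omit [DecidableEq n] in
lemma PosSemidef.ofReal_re_dotProduct_mulVec {M : Matrix n n ℂ} (hM : M.PosSemidef) (x : n → ℂ) :
    (((star x ⬝ᵥ (M *ᵥ x)).re : ℝ) : ℂ) = star x ⬝ᵥ (M *ᵥ x) :=
  (Complex.eq_re_of_ofReal_le (r := 0) (by simpa using hM.dotProduct_mulVec_nonneg x)).symm

end Matrix

theorem kalman_cumulative_functional
    {m l : ℕ}
    (B₀ : Matrix (Fin m) (Fin m) ℂ) (hB₀ : B₀.PosDef)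
    (R : Matrix (Fin l) (Fin l) ℂ) (hR : R.PosDef)
    (A : ℕ → Matrix (Fin l) (Fin m) ℂ)
    (f : ℕ → (Fin l → ℂ))
    (φ₀ : Fin m → ℂ)
    (B : ℕ → Matrix (Fin m) (Fin m) ℂ)
    (φ : ℕ → (Fin m → ℂ))
    (K : ℕ → Matrix (Fin m) (Fin l) ℂ)
    (hB0 : B 0 = B₀)
    (hφ0 : φ 0 = φ₀)
    (hK : ∀ n, K n = B n * (A n)ᴴ * (R + A n * B n * (A n)ᴴ)⁻¹)
    (hφ : ∀ n, φ (n + 1) = φ n + K n *ᵥ (f n - A n *ᵥ φ n))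
    (hBrec : ∀ n, B (n + 1) = (1 - K n * A n) * B n) :
    ∃ c : ℕ → ℝ, ∀ (n : ℕ) (ψ : Fin m → ℂ),
      star (ψ - φ₀) ⬝ᵥ (B₀⁻¹ *ᵥ (ψ - φ₀))
        + ∑ j ∈ range n, star (f j - A j *ᵥ ψ) ⬝ᵥ (R⁻¹ *ᵥ (f j - A j *ᵥ ψ))
      = star (ψ - φ n) ⬝ᵥ ((B n)⁻¹ *ᵥ (ψ - φ n)) + (c n : ℂ) := by
  have hBsucc n : B (n + 1) = kalmanCov (B n) R (A n) := by rw [hBrec, hK]; rfl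
  have hφsucc n : φ (n + 1) = φ n + kalmanGain (B n) R (A n) *ᵥ (f n - A n *ᵥ φ n) := by
    rw [hφ, hK]; rfl
  have hBpos n : (B n).PosDef := by
    induction n with
    | zero => rwa [hB0]
    | succ n ih => rw [hBsucc]; exact ih.kalmanCov (A n) hR
  set d : ℕ → ℂ := fun j =>
    star (f j - A j *ᵥ φ j) ⬝ᵥ ((R + A j * B j * (A j)ᴴ)⁻¹ *ᵥ (f j - A j *ᵥ φ j))
  have hd j : ((d j).re : ℂ) = d j :=
    ((hR.add_mul_mul_conjTranspose (A j) (hBpos j)).inv.posSemidef).ofReal_re_dotProduct_mulVec _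
  have hJ n ψ : star (ψ - φ₀) ⬝ᵥ (B₀⁻¹ *ᵥ (ψ - φ₀))
        + ∑ j ∈ range n, star (f j - A j *ᵥ ψ) ⬝ᵥ (R⁻¹ *ᵥ (f j - A j *ᵥ ψ))
      = star (ψ - φ n) ⬝ᵥ ((B n)⁻¹ *ᵥ (ψ - φ n)) + ∑ j ∈ range n, d j := by
    induction n with
    | zero => simp [hB0, hφ0]
    | succ n ih =>
      rw [sum_range_succ, sum_range_succ, ← add_assoc, ih, add_right_comm,
        kalman_quadForm_step (A n) (hBpos n) hR, hBsucc, hφsucc, add_assoc, add_comm (d n)]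
  refine ⟨fun n => ∑ j ∈ range n, (d j).re, fun n ψ => ?_⟩
  rw [hJ]
  push_cast
  simp only [hd]
end

section
/- If the stacked operator Ā : X → Yᴺ defined by Āφ = (A₁φ,…,A_Nφ) is injective and f_n = A_n φ_true for all n, then the Kalman filter final state φ_N^{(α)} (with B₀ = α⁻¹I and initial guess φ₀) converges to φ_true as α → 0⁺. -/
open Matrix ComplexOrder Finset Filter


private lemma sum_mulVec' {m k : ℕ} (s : Finset ℕ) (M : ℕ → Matrix (Fin m) (Fin k) ℂ)
    (v : Fin k → ℂ) : (∑ n ∈ s, M n) *ᵥ v = ∑ n ∈ s, M n *ᵥ v :=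
  map_sum (Matrix.mulVec.addMonoidHomLeft v) M s

private lemma isHermitian_sum' {m : ℕ} (s : Finset ℕ) (M : ℕ → Matrix (Fin m) (Fin m) ℂ)
    (h : ∀ n ∈ s, (M n).IsHermitian) : (∑ n ∈ s, M n).IsHermitian := by
  classical
  induction s using Finset.induction with
  | empty => simp [Matrix.IsHermitian]
  | insert _ _ hns ih =>
    rw [Finset.sum_insert hns]
    exact ((h _ (Finset.mem_insert_self _ _)).add
      (ih fun n hn => h n (Finset.mem_insert_of_mem hn)))

theorem kalman_filter_convergence_to_truth
    {m l N : ℕ}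
    (R : Matrix (Fin l) (Fin l) ℂ) (hR : R.PosDef)
    (A : ℕ → Matrix (Fin l) (Fin m) ℂ)
    (hinj : ∀ x : Fin m → ℂ, (∀ n < N, A n *ᵥ x = 0) → x = 0)
    (φtrue : Fin m → ℂ)
    (f : ℕ → (Fin l → ℂ)) (hf : ∀ n, f n = A n *ᵥ φtrue)
    (φ₀ : Fin m → ℂ)
    (φN : ℝ → (Fin m → ℂ))
    (hφN : ∀ α : ℝ, 0 < α →
      φN α = φ₀ + ((α : ℂ) • (1 : Matrix (Fin m) (Fin m) ℂ)
              + ∑ n ∈ range N, (A n)ᴴ * R⁻¹ * A n)⁻¹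
            *ᵥ (∑ n ∈ range N, (A n)ᴴ *ᵥ (R⁻¹ *ᵥ (f n - A n *ᵥ φ₀)))) :
    Tendsto φN (nhdsWithin 0 (Set.Ioi 0)) (nhds φtrue) := by
  set S : Matrix (Fin m) (Fin m) ℂ := ∑ n ∈ range N, (A n)ᴴ * R⁻¹ * A n with hSdef
  set w : Fin m → ℂ := φtrue - φ₀ with hw
  have hRinv : R⁻¹.PosDef := hR.inv
  -- the rhs vector equals S *ᵥ w
  have hv : (∑ n ∈ range N, (A n)ᴴ *ᵥ (R⁻¹ *ᵥ (f n - A n *ᵥ φ₀))) = S *ᵥ w := by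
    rw [hSdef, sum_mulVec']
    refine Finset.sum_congr rfl fun n _ => ?_
    rw [hf n, ← Matrix.mulVec_sub, ← hw, ← Matrix.mulVec_mulVec, ← Matrix.mulVec_mulVec]
  -- S is positive definite
  have hterm : ∀ n, ((A n)ᴴ * R⁻¹ * A n).PosSemidef := fun n =>
    hRinv.posSemidef.conjTranspose_mul_mul_same (A n)
  have key : ∀ (x : Fin m → ℂ) n, star x ⬝ᵥ ((A n)ᴴ * R⁻¹ * A n) *ᵥ x
      = star (A n *ᵥ x) ⬝ᵥ (R⁻¹ *ᵥ (A n *ᵥ x)) := by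
    intro x n
    rw [← Matrix.mulVec_mulVec, ← Matrix.mulVec_mulVec, Matrix.dotProduct_mulVec,
      ← Matrix.star_mulVec]
  have hS : S.PosDef := by
    rw [Matrix.posDef_iff_dotProduct_mulVec]
    constructor
    · exact isHermitian_sum' _ _ fun n _ => (hterm n).1
    · intro x hx
      have hds : star x ⬝ᵥ S *ᵥ x = ∑ n ∈ range N, star x ⬝ᵥ ((A n)ᴴ * R⁻¹ * A n) *ᵥ x := by
        rw [hSdef, sum_mulVec']
        simp only [dotProduct, Finset.sum_apply, Finset.mul_sum]
        exact Finset.sum_comm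
      rw [hds]
      obtain ⟨n, hn, hAx⟩ : ∃ n, n < N ∧ A n *ᵥ x ≠ 0 := by
        by_contra h
        push_neg at h
        exact hx (hinj x h)
      refine Finset.sum_pos' (fun i _ => (hterm i).dotProduct_mulVec_nonneg x) ⟨n, Finset.mem_range.2 hn, ?_⟩
      rw [key]
      exact hRinv.dotProduct_mulVec_pos hAx
  have hdet : S.det ≠ 0 := hS.det_pos.ne'
  -- continuity
  have hg : Tendsto (fun α : ℝ => (α : ℂ) • (1 : Matrix (Fin m) (Fin m) ℂ) + S)
      (nhdsWithin 0 (Set.Ioi 0)) (nhds S) := by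
    have : Tendsto (fun α : ℝ => (α : ℂ) • (1 : Matrix (Fin m) (Fin m) ℂ) + S)
        (nhds 0) (nhds S) := by
      have hcont : Continuous (fun α : ℝ => (α : ℂ) • (1 : Matrix (Fin m) (Fin m) ℂ) + S) :=
        (Complex.continuous_ofReal.smul continuous_const).add continuous_const
      have := hcont.tendsto 0
      simpa using this
    exact this.mono_left nhdsWithin_le_nhds
  have hinvC : ContinuousAt Inv.inv S := by
    apply continuousAt_matrix_inv
    rw [Ring.inverse_eq_inv']
    exact continuousAt_inv₀ hdet
  have htend : Tendsto (fun α : ℝ => φ₀ + ((α : ℂ) • (1 : Matrix (Fin m) (Fin m) ℂ) + S)⁻¹ *ᵥ (S *ᵥ w))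
      (nhdsWithin 0 (Set.Ioi 0)) (nhds (φ₀ + S⁻¹ *ᵥ (S *ᵥ w))) := by
    have hc : ContinuousAt (fun M : Matrix (Fin m) (Fin m) ℂ => φ₀ + M⁻¹ *ᵥ (S *ᵥ w)) S := by
      exact (continuousAt_const.add ((Continuous.matrix_mulVec continuous_id continuous_const).continuousAt.comp hinvC))
    exact hc.tendsto.comp hg
  have hfinal : φ₀ + S⁻¹ *ᵥ (S *ᵥ w) = φtrue := by
    rw [Matrix.mulVec_mulVec, Matrix.nonsing_inv_mul S (isUnit_iff_ne_zero.2 hdet),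
      Matrix.one_mulVec, hw]
    abel
  rw [← hfinal]
  refine htend.congr' ?_
  filter_upwards [self_mem_nhdsWithin] with α hα
  rw [hφN α hα, hv]
end
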